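/- For every (x_h, y_h) ∈ ℝ² with (x_h, y_h) ≠ (0,0), one has the limit lim_{μ → 1⁻} (1−μ)^{−2/3} · [ Ω_μ( μ + (1−μ)^{1/3} x_h , (1−μ)^{1/3} y_h ) − 3/2 ] = (3/2)·x_h² + 1/√(x_h² + y_h²), i.e. the rescaled RTBP effective potential converges to the Hill potential Ψ(x_h,y_h) = (3/2)x_h² + 1/√(x_h²+y_h²) as the mass parameter μ tends to 1. -/

import Mathlib

/-!
Put `δ = (1-μ)^{1/3}`, so that `μ = 1 - δ³`. At the point `(μ + δ x_h, δ y_h)` the distance to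
`P₁` is `δρ` with `ρ = √(x_h² + y_h²)`, and the distance `R` to `P₂` satisfies
`R² = 1 + 2δx_h + δ²ρ²`. Eliminating `x² + y²` through `R²` gives
`Ω_μ - 3/2 = (1-δ³) f(R) + δ²/ρ + O(δ³)` with `f(R) = R²/2 + 1/R - 3/2 = (R-1)²(R+2)/(2R)`,
which vanishes to second order at `R = 1`. Since `(R-1)/δ = (2x_h + δρ²)/(R+1)`, the quotient by
`δ²` is a function of `δ` continuous at `0`, where it equals `(3/2)x_h² + 1/ρ`.
-/

open Real Set Filter

noncomputable section

/-- The effective potential `Ω_μ` of the planar circular restricted three-body problem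
in rotating (synodical) coordinates. -/
def Omega (μ x y : ℝ) : ℝ :=
  (x^2+y^2)/2 + (1-μ)/Real.sqrt ((x-μ)^2+y^2) + μ/Real.sqrt ((x-μ+1)^2+y^2)
    + μ*(1-μ)/2

open Topology

theorem tendsto_one_sub_rpow_nhdsLT_one {p : ℝ} (hp : 0 < p) :
    Tendsto (fun μ : ℝ => (1 - μ) ^ p) (𝓝[<] 1) (𝓝[>] 0) := by
  refine tendsto_nhdsWithin_iff.mpr ⟨?_, ?_⟩
  · have h : Tendsto (fun μ : ℝ => 1 - μ) (𝓝[<] 1) (𝓝 0) := by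
      simpa using ((continuous_sub_left (1 : ℝ)).tendsto 1).mono_left
        nhdsWithin_le_nhds
    simpa [Function.comp_def, Real.zero_rpow hp.ne'] using
      (Real.continuousAt_rpow_const 0 p (Or.inr hp.le)).tendsto.comp h
  · filter_upwards [self_mem_nhdsWithin] with μ (hμ : μ < 1)
    exact Real.rpow_pos_of_pos (sub_pos.mpr hμ) p

theorem sq_div_two_add_inv_sub_three_halves {R : ℝ} (hR : R ≠ 0) :
    R ^ 2 / 2 + 1 / R - 3 / 2 = (R - 1) ^ 2 * (R + 2) / (2 * R) := by
  field_simp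
  ring

def secondPrimaryDist (xh yh δ : ℝ) : ℝ := √((1 + δ * xh) ^ 2 + (δ * yh) ^ 2)

def rescaledOmega (xh yh δ : ℝ) : ℝ :=
  (1 - δ ^ 3) * ((2 * xh + δ * (xh ^ 2 + yh ^ 2)) / (secondPrimaryDist xh yh δ + 1)) ^ 2
      * (secondPrimaryDist xh yh δ + 2) / (2 * secondPrimaryDist xh yh δ)
    - 3 * δ / 2 + δ ^ 3 * (xh ^ 2 + yh ^ 2) / 2 + 1 / √(xh ^ 2 + yh ^ 2)

@[fun_prop]
theorem continuous_secondPrimaryDist (xh yh : ℝ) : Continuous (secondPrimaryDist xh yh) := by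
  unfold secondPrimaryDist
  fun_prop

theorem secondPrimaryDist_zero (xh yh : ℝ) : secondPrimaryDist xh yh 0 = 1 := by
  simp [secondPrimaryDist]

theorem continuousAt_rescaledOmega (xh yh : ℝ) : ContinuousAt (rescaledOmega xh yh) 0 := by
  unfold rescaledOmega
  fun_prop (disch := norm_num [secondPrimaryDist_zero])

theorem rescaledOmega_zero (xh yh : ℝ) :
    rescaledOmega xh yh 0 = 3 / 2 * xh ^ 2 + 1 / √(xh ^ 2 + yh ^ 2) := by
  simp only [rescaledOmega, secondPrimaryDist_zero]
  ring

theorem omega_sub_div_eq_rescaledOmega (xh yh : ℝ) {μ δ : ℝ} (hδ : 0 < δ)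
    (hμ : δ ^ 3 = 1 - μ) (hR : secondPrimaryDist xh yh δ ≠ 0) :
    (Omega μ (μ + δ * xh) (δ * yh) - 3 / 2) / δ ^ 2 = rescaledOmega xh yh δ := by
  obtain rfl : μ = 1 - δ ^ 3 := by linarith
  have hR2 : secondPrimaryDist xh yh δ ^ 2 = 1 + 2 * δ * xh + δ ^ 2 * (xh ^ 2 + yh ^ 2) := by
    rw [secondPrimaryDist, Real.sq_sqrt (by positivity)]; ring
  have hr₁ : √((1 - δ ^ 3 + δ * xh - (1 - δ ^ 3)) ^ 2 + (δ * yh) ^ 2)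
      = δ * √(xh ^ 2 + yh ^ 2) := by
    rw [show (1 - δ ^ 3 + δ * xh - (1 - δ ^ 3)) ^ 2 + (δ * yh) ^ 2 = δ ^ 2 * (xh ^ 2 + yh ^ 2)
      by ring, Real.sqrt_mul (sq_nonneg δ), Real.sqrt_sq hδ.le]
  have hr₂ : √((1 - δ ^ 3 + δ * xh - (1 - δ ^ 3) + 1) ^ 2 + (δ * yh) ^ 2)
      = secondPrimaryDist xh yh δ := by
    rw [secondPrimaryDist]; ring_nf
  have hR1 : 0 < secondPrimaryDist xh yh δ + 1 :=
    add_pos_of_nonneg_of_pos (Real.sqrt_nonneg _) one_pos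
  rw [rescaledOmega]
  set R := secondPrimaryDist xh yh δ
  set ρ := √(xh ^ 2 + yh ^ 2)
  have hΩ : Omega (1 - δ ^ 3) (1 - δ ^ 3 + δ * xh) (δ * yh) - 3 / 2
      = (1 - δ ^ 3) * (R ^ 2 / 2 + 1 / R - 3 / 2)
        - 3 * δ ^ 3 / 2 + δ ^ 5 * (xh ^ 2 + yh ^ 2) / 2 + δ ^ 2 / ρ := by
    have hcollision : (1 - (1 - δ ^ 3)) / (δ * ρ) = δ ^ 2 / ρ := by
      rw [sub_sub_cancel, mul_comm δ, pow_succ, mul_div_mul_right _ _ hδ.ne']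
    rw [Omega, hr₁, hr₂, hcollision]
    linear_combination (-(1 - δ ^ 3) / 2) * hR2
  have hRsub : R - 1 = δ * ((2 * xh + δ * (xh ^ 2 + yh ^ 2)) / (R + 1)) := by
    rw [mul_div_assoc', eq_div_iff hR1.ne']
    linear_combination hR2
  rw [hΩ, sq_div_two_add_inv_sub_three_halves hR, hRsub, div_eq_iff (pow_ne_zero 2 hδ.ne')]
  ring

theorem hill_limit_of_potential_general (xh yh : ℝ) :
    Tendsto
      (fun μ : ℝ =>
        (Omega μ (μ + (1-μ)^((1:ℝ)/3)*xh) ((1-μ)^((1:ℝ)/3)*yh) - 3/2)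
          / (1-μ)^((2:ℝ)/3))
      (nhdsWithin 1 (Set.Iio 1))
      (nhds ((3/2)*xh^2 + 1/Real.sqrt (xh^2+yh^2))) := by
  have hδ := tendsto_one_sub_rpow_nhdsLT_one (p := 1 / 3) (by norm_num)
  have hlim := (continuousAt_rescaledOmega xh yh).tendsto.comp (hδ.mono_right nhdsWithin_le_nhds)
  rw [rescaledOmega_zero] at hlim
  refine hlim.congr' ?_
  have hR : ∀ᶠ δ in 𝓝[>] 0, secondPrimaryDist xh yh δ ≠ 0 :=
    ((continuous_secondPrimaryDist xh yh).continuousAt.eventually_ne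
      (by rw [secondPrimaryDist_zero]; exact one_ne_zero)).filter_mono nhdsWithin_le_nhds
  filter_upwards [self_mem_nhdsWithin, hδ.eventually hR, hδ.eventually self_mem_nhdsWithin]
    with μ (hμ : μ < 1) hRμ (hδμ : 0 < _)
  have h1μ : 0 ≤ 1 - μ := by linarith
  have hδ3 : ((1 - μ) ^ (1 / 3 : ℝ)) ^ 3 = 1 - μ := by
    rw [← rpow_natCast, ← rpow_mul h1μ]; norm_num
  have hδ2 : (1 - μ) ^ (2 / 3 : ℝ) = ((1 - μ) ^ (1 / 3 : ℝ)) ^ 2 := by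
    rw [← rpow_natCast, ← rpow_mul h1μ]; norm_num
  rw [Function.comp_apply, hδ2, omega_sub_div_eq_rescaledOmega xh yh hδμ hδ3 hRμ]

/-- **Hill limit of the RTBP potential**: as `μ → 1⁻`, the rescaled effective potential
converges, at every point `(x_h,y_h) ≠ (0,0)`, to the Hill potential
`Ψ(x_h,y_h) = (3/2)x_h² + 1/√(x_h²+y_h²)`. -/
theorem hill_limit_of_potential (xh yh : ℝ) (h : (xh, yh) ≠ (0, 0)) :
    Tendsto
      (fun μ : ℝ =>
        (Omega μ (μ + (1-μ)^((1:ℝ)/3)*xh) ((1-μ)^((1:ℝ)/3)*yh) - 3/2)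
          / (1-μ)^((2:ℝ)/3))
      (nhdsWithin 1 (Set.Iio 1))
      (nhds ((3/2)*xh^2 + 1/Real.sqrt (xh^2+yh^2))) :=
  hill_limit_of_potential_general xh yh

end
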